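/- Let ε = 1 or ε = −1, let b₀, b₁, c₀, c₁, c₂ : ℝ → ℝ be smooth, and let η : ℝ → ℝ be smooth. Suppose the smooth function u : ℝ³ → ℝ satisfies (u_t + u u_x + u_xxx)_x + ε u_yy + (b₁(t)y + b₀(t)) u_xy + (c₂(t)y² + c₁(t)y + c₀(t)) u_xx = 0 at every point. Define ξ_Y(y,t) := (ε/2)y(b₁(t)η(t) − η′(t)) and φ_Y(y,t) := [−2c₂(t)η(t) + (ε/2)(−η″(t) + b₁′(t)η(t) + b₁(t)²η(t))]y − c₁(t)η(t) + (ε/2)b₀(t)(b₁(t)η(t) − η′(t)), and the characteristic Q(x,y,t) := φ_Y(y,t) − ξ_Y(y,t)·u_x(x,y,t) − η(t)·u_y(x,y,t). Then Q satisfies the linearized equation at u: (Q_t + (uQ)_x + Q_xxx)_x + ε Q_yy + (b₁(t)y + b₀(t)) Q_xy + (c₂(t)y² + c₁(t)y + c₀(t)) Q_xx = 0 at every point. -/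

import Mathlib

/-- Partial derivative in the first (x) variable. -/
noncomputable def px (u : ℝ → ℝ → ℝ → ℝ) (x y t : ℝ) : ℝ := deriv (fun s => u s y t) x
/-- Partial derivative in the second (y) variable. -/
noncomputable def py (u : ℝ → ℝ → ℝ → ℝ) (x y t : ℝ) : ℝ := deriv (fun s => u x s t) y
/-- Partial derivative in the third (t) variable. -/
noncomputable def pt (u : ℝ → ℝ → ℝ → ℝ) (x y t : ℝ) : ℝ := deriv (fun s => u x y s) t

/-- Smoothness of a function of three real variables. -/
def Smooth3 (u : ℝ → ℝ → ℝ → ℝ) : Prop :=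
  ContDiff ℝ (⊤ : ℕ∞) (fun p : ℝ × ℝ × ℝ => u p.1 p.2.1 p.2.2)

/-- The canonical generalized KP equation (5.7). -/
def SolvesGKP57 (ε : ℝ) (b₀ b₁ c₀ c₁ c₂ : ℝ → ℝ) (u : ℝ → ℝ → ℝ → ℝ) : Prop :=
  ∀ x y t : ℝ,
    px (fun x y t => pt u x y t + u x y t * px u x y t + px (px (px u)) x y t) x y t
      + ε * py (py u) x y t + (b₁ t * y + b₀ t) * px (py u) x y t
      + (c₂ t * y ^ 2 + c₁ t * y + c₀ t) * px (px u) x y t = 0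

/-- `Q` solves the linearization of equation (5.7) at `u`. -/
def SolvesLinGKP57 (ε : ℝ) (b₀ b₁ c₀ c₁ c₂ : ℝ → ℝ) (u Q : ℝ → ℝ → ℝ → ℝ) : Prop :=
  ∀ x y t : ℝ,
    px (fun x y t => pt Q x y t + px (fun x y t => u x y t * Q x y t) x y t
        + px (px (px Q)) x y t) x y t
      + ε * py (py Q) x y t + (b₁ t * y + b₀ t) * px (py Q) x y t
      + (c₂ t * y ^ 2 + c₁ t * y + c₀ t) * px (px Q) x y t = 0

abbrev V3 := ℝ × ℝ × ℝ

noncomputable def DD (v : V3) (F : V3 → ℝ) (p : V3) : ℝ := fderiv ℝ F p v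

def e1 : V3 := (1,0,0)
def e2 : V3 := (0,1,0)
def e3 : V3 := (0,0,1)

/-- lift of a function of `t` -/
def T (g : ℝ → ℝ) : V3 → ℝ := fun p => g p.2.2
/-- the coordinate `y` -/
def Yc : V3 → ℝ := fun p => p.2.1

@[fun_prop]
theorem ContDiff.dd {F : V3 → ℝ} (hF : ContDiff ℝ (⊤ : ℕ∞) F) (v : V3) :
    ContDiff ℝ (⊤ : ℕ∞) (DD v F) := by
  have h1 : ContDiff ℝ (⊤ : ℕ∞) (fderiv ℝ F) := hF.fderiv_right (by simp)
  exact h1.clm_apply contDiff_const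

@[fun_prop]
theorem ContDiff.tlift {g : ℝ → ℝ} (hg : ContDiff ℝ (⊤ : ℕ∞) g) : ContDiff ℝ (⊤ : ℕ∞) (T g) :=
  hg.comp (contDiff_snd.comp contDiff_snd)

@[fun_prop]
theorem contDiff_Yc : ContDiff ℝ (⊤ : ℕ∞) Yc := contDiff_fst.comp contDiff_snd

theorem contDiff_top_deriv {g : ℝ → ℝ} (hg : ContDiff ℝ (⊤ : ℕ∞) g) : ContDiff ℝ (⊤ : ℕ∞) (deriv g) := by
  have h : ContDiff ℝ (((⊤ : ℕ∞) : WithTop ℕ∞) + 1) g := by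
    have : (((⊤ : ℕ∞) : WithTop ℕ∞) + 1) = ((⊤ : ℕ∞) : WithTop ℕ∞) := by simp
    rwa [this]
  exact (contDiff_succ_iff_deriv.mp h).2.2

theorem DD_add' {F G : V3 → ℝ} (hF : ContDiff ℝ (⊤ : ℕ∞) F) (hG : ContDiff ℝ (⊤ : ℕ∞) G) (v : V3) :
    DD v (fun q => F q + G q) = fun p => DD v F p + DD v G p := by
  funext p
  unfold DD
  rw [fderiv_fun_add (hF.differentiable (by simp) p) (hG.differentiable (by simp) p)]
  rfl

theorem DD_sub' {F G : V3 → ℝ} (hF : ContDiff ℝ (⊤ : ℕ∞) F) (hG : ContDiff ℝ (⊤ : ℕ∞) G) (v : V3) :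
    DD v (fun q => F q - G q) = fun p => DD v F p - DD v G p := by
  funext p
  unfold DD
  rw [fderiv_fun_sub (hF.differentiable (by simp) p) (hG.differentiable (by simp) p)]
  rfl

theorem DD_neg' {F : V3 → ℝ} (v : V3) :
    DD v (fun q => -F q) = fun p => -DD v F p := by
  funext p
  unfold DD
  rw [fderiv_fun_neg]
  rfl

theorem DD_mul' {F G : V3 → ℝ} (hF : ContDiff ℝ (⊤ : ℕ∞) F) (hG : ContDiff ℝ (⊤ : ℕ∞) G) (v : V3) :
    DD v (fun q => F q * G q) = fun p => DD v F p * G p + F p * DD v G p := by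
  funext p
  unfold DD
  rw [fderiv_fun_mul (hF.differentiable (by simp) p) (hG.differentiable (by simp) p)]
  simp [mul_comm]
  ring

theorem DD_const' (c : ℝ) (v : V3) : DD v (fun _ => c) = fun _ => 0 := by
  funext p; simp [DD]

theorem DD_T {g : ℝ → ℝ} (hg : ContDiff ℝ (⊤ : ℕ∞) g) (v : V3) :
    DD v (T g) = fun p => deriv g p.2.2 * v.2.2 := by
  funext p
  unfold DD T
  have h1 : HasDerivAt g (deriv g p.2.2) p.2.2 :=
    ((hg.differentiable (by simp)) p.2.2).hasDerivAt
  have h2 : HasFDerivAt (fun q : V3 => q.2.2)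
      ((ContinuousLinearMap.snd ℝ ℝ ℝ).comp (ContinuousLinearMap.snd ℝ ℝ (ℝ × ℝ))) p :=
    ((ContinuousLinearMap.snd ℝ ℝ ℝ).comp (ContinuousLinearMap.snd ℝ ℝ (ℝ × ℝ))).hasFDerivAt
  have h3 : HasFDerivAt (fun q : V3 => g q.2.2)
      ((ContinuousLinearMap.smulRight (1 : ℝ →L[ℝ] ℝ) (deriv g p.2.2)).comp
        ((ContinuousLinearMap.snd ℝ ℝ ℝ).comp (ContinuousLinearMap.snd ℝ ℝ (ℝ × ℝ)))) p :=
    h1.hasFDerivAt.comp p h2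
  rw [h3.fderiv]
  simp [mul_comm]

theorem DD_T1 {g : ℝ → ℝ} (hg : ContDiff ℝ (⊤ : ℕ∞) g) : DD e1 (T g) = fun _ => 0 := by
  rw [DD_T hg]; funext p; simp [e1]

theorem DD_T2 {g : ℝ → ℝ} (hg : ContDiff ℝ (⊤ : ℕ∞) g) : DD e2 (T g) = fun _ => 0 := by
  rw [DD_T hg]; funext p; simp [e2]

theorem DD_T3 {g : ℝ → ℝ} (hg : ContDiff ℝ (⊤ : ℕ∞) g) : DD e3 (T g) = T (deriv g) := by
  rw [DD_T hg]; funext p; simp [e3, T]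

theorem DD_Y (v : V3) : DD v Yc = fun _ => v.2.1 := by
  funext p
  unfold DD Yc
  have h2 : HasFDerivAt (fun q : V3 => q.2.1)
      ((ContinuousLinearMap.fst ℝ ℝ ℝ).comp (ContinuousLinearMap.snd ℝ ℝ (ℝ × ℝ))) p :=
    ((ContinuousLinearMap.fst ℝ ℝ ℝ).comp (ContinuousLinearMap.snd ℝ ℝ (ℝ × ℝ))).hasFDerivAt
  rw [h2.fderiv]
  rfl

theorem DD_Y1 : DD e1 Yc = fun _ => 0 := by rw [DD_Y]; rfl
theorem DD_Y2 : DD e2 Yc = fun _ => 1 := by rw [DD_Y]; rfl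
theorem DD_Y3 : DD e3 Yc = fun _ => 0 := by rw [DD_Y]; rfl

theorem DD_comm {F : V3 → ℝ} (hF : ContDiff ℝ (⊤ : ℕ∞) F) (v w : V3) :
    DD v (DD w F) = DD w (DD v F) := by
  funext p
  have hd : Differentiable ℝ (fderiv ℝ F) :=
    (hF.fderiv_right (m := (⊤ : ℕ∞)) (by simp)).differentiable (by simp)
  have key : ∀ a b : V3, DD a (DD b F) p = fderiv ℝ (fderiv ℝ F) p a b := by
    intro a b
    unfold DD
    rw [fderiv_clm_apply (hd p) (differentiableAt_const b)]
    simp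
  rw [key, key]
  exact (hF.contDiffAt.isSymmSndFDerivAt (by rw [minSmoothness_of_isRCLikeNormedField]; exact WithTop.coe_le_coe.mpr le_top)) v w

theorem DD_comm21 {F : V3 → ℝ} (hF : ContDiff ℝ (⊤ : ℕ∞) F) :
    DD e2 (DD e1 F) = DD e1 (DD e2 F) := DD_comm hF e2 e1
theorem DD_comm31 {F : V3 → ℝ} (hF : ContDiff ℝ (⊤ : ℕ∞) F) :
    DD e3 (DD e1 F) = DD e1 (DD e3 F) := DD_comm hF e3 e1
theorem DD_comm32 {F : V3 → ℝ} (hF : ContDiff ℝ (⊤ : ℕ∞) F) :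
    DD e3 (DD e2 F) = DD e2 (DD e3 F) := DD_comm hF e3 e2


/-- `f` is the curried form of `F`. -/
def Rep3 (f : ℝ → ℝ → ℝ → ℝ) (F : V3 → ℝ) : Prop := ∀ x y t, f x y t = F (x, y, t)

theorem Rep3.pxD {f : ℝ → ℝ → ℝ → ℝ} {F : V3 → ℝ} (h : Rep3 f F) (hF : ContDiff ℝ (⊤ : ℕ∞) F) :
    Rep3 (px f) (DD e1 F) := by
  intro x y t
  have hs : (fun s => f s y t) = fun s => F (s, y, t) := funext fun s => h s y t
  have h1 : HasDerivAt (fun s : ℝ => ((s, y, t) : V3)) ((1, 0, 0) : V3) x :=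
    HasDerivAt.prodMk (hasDerivAt_id x) (hasDerivAt_const x ((y, t) : ℝ × ℝ))
  have hder : HasDerivAt (fun s => F (s, y, t)) (DD e1 F (x, y, t)) x :=
    ((hF.differentiable (by simp) (x, y, t)).hasFDerivAt.comp_hasDerivAt x h1)
  rw [px, hs, hder.deriv]

theorem Rep3.pyD {f : ℝ → ℝ → ℝ → ℝ} {F : V3 → ℝ} (h : Rep3 f F) (hF : ContDiff ℝ (⊤ : ℕ∞) F) :
    Rep3 (py f) (DD e2 F) := by
  intro x y t
  have hs : (fun s => f x s t) = fun s => F (x, s, t) := funext fun s => h x s t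
  have h1 : HasDerivAt (fun s : ℝ => ((x, s, t) : V3)) ((0, 1, 0) : V3) y :=
    HasDerivAt.prodMk (hasDerivAt_const y x) (HasDerivAt.prodMk (hasDerivAt_id y) (hasDerivAt_const y t))
  have hder : HasDerivAt (fun s => F (x, s, t)) (DD e2 F (x, y, t)) y :=
    ((hF.differentiable (by simp) (x, y, t)).hasFDerivAt.comp_hasDerivAt y h1)
  rw [py, hs, hder.deriv]

theorem Rep3.ptD {f : ℝ → ℝ → ℝ → ℝ} {F : V3 → ℝ} (h : Rep3 f F) (hF : ContDiff ℝ (⊤ : ℕ∞) F) :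
    Rep3 (pt f) (DD e3 F) := by
  intro x y t
  have hs : (fun s => f x y s) = fun s => F (x, y, s) := funext fun s => h x y s
  have h1 : HasDerivAt (fun s : ℝ => ((x, y, s) : V3)) ((0, 0, 1) : V3) t :=
    HasDerivAt.prodMk (hasDerivAt_const t x) (HasDerivAt.prodMk (hasDerivAt_const t y) (hasDerivAt_id t))
  have hder : HasDerivAt (fun s => F (x, y, s)) (DD e3 F (x, y, t)) t :=
    ((hF.differentiable (by simp) (x, y, t)).hasFDerivAt.comp_hasDerivAt t h1)
  rw [pt, hs, hder.deriv]

theorem Rep3.addR {f g : ℝ → ℝ → ℝ → ℝ} {F G : V3 → ℝ} (hf : Rep3 f F) (hg : Rep3 g G) :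
    Rep3 (fun x y t => f x y t + g x y t) (fun p => F p + G p) := fun x y t => by
  simp only [hf x y t, hg x y t]

theorem Rep3.mulR {f g : ℝ → ℝ → ℝ → ℝ} {F G : V3 → ℝ} (hf : Rep3 f F) (hg : Rep3 g G) :
    Rep3 (fun x y t => f x y t * g x y t) (fun p => F p * G p) := fun x y t => by
  simp only [hf x y t, hg x y t]

set_option maxHeartbeats 4000000 in
/-- the evolutionary characteristic of the Kac–Moody generator `Y(η)` of
equation (5.10) solves the linearized equation along every solution of (5.7). -/
theorem stmt10 (ε : ℝ) (hε : ε = 1 ∨ ε = -1)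
    (b₀ b₁ c₀ c₁ c₂ : ℝ → ℝ) (hb₀ : ContDiff ℝ (⊤ : ℕ∞) b₀) (hb₁ : ContDiff ℝ (⊤ : ℕ∞) b₁)
    (hc₀ : ContDiff ℝ (⊤ : ℕ∞) c₀) (hc₁ : ContDiff ℝ (⊤ : ℕ∞) c₁) (hc₂ : ContDiff ℝ (⊤ : ℕ∞) c₂)
    (η : ℝ → ℝ) (hη : ContDiff ℝ (⊤ : ℕ∞) η)
    (u : ℝ → ℝ → ℝ → ℝ) (hu : Smooth3 u) (hsol : SolvesGKP57 ε b₀ b₁ c₀ c₁ c₂ u)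
    (ξY φY : ℝ → ℝ → ℝ)
    (hξY : ξY = fun y t => ε / 2 * y * (b₁ t * η t - deriv η t))
    (hφY : φY = fun y t =>
      (-2 * c₂ t * η t + ε / 2 * (-(deriv (deriv η) t) + deriv b₁ t * η t
          + (b₁ t) ^ 2 * η t)) * y
        - c₁ t * η t + ε / 2 * b₀ t * (b₁ t * η t - deriv η t))
    (Q : ℝ → ℝ → ℝ → ℝ)
    (hQ : Q = fun x y t => φY y t - ξY y t * px u x y t - η t * py u x y t) :
    SolvesLinGKP57 ε b₀ b₁ c₀ c₁ c₂ u Q := by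
  have hε2 : ε ^ 2 = 1 := by rcases hε with h | h <;> rw [h] <;> norm_num
  have hb₁1 : ContDiff ℝ (⊤ : ℕ∞) (deriv b₁) := contDiff_top_deriv hb₁
  have hb₁2 : ContDiff ℝ (⊤ : ℕ∞) (deriv (deriv b₁)) := contDiff_top_deriv hb₁1
  have hb₀1 : ContDiff ℝ (⊤ : ℕ∞) (deriv b₀) := contDiff_top_deriv hb₀
  have hc₀1 : ContDiff ℝ (⊤ : ℕ∞) (deriv c₀) := contDiff_top_deriv hc₀
  have hc₁1 : ContDiff ℝ (⊤ : ℕ∞) (deriv c₁) := contDiff_top_deriv hc₁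
  have hc₂1 : ContDiff ℝ (⊤ : ℕ∞) (deriv c₂) := contDiff_top_deriv hc₂
  have hη1 : ContDiff ℝ (⊤ : ℕ∞) (deriv η) := contDiff_top_deriv hη
  have hη2 : ContDiff ℝ (⊤ : ℕ∞) (deriv (deriv η)) := contDiff_top_deriv hη1
  have hη3 : ContDiff ℝ (⊤ : ℕ∞) (deriv (deriv (deriv η))) := contDiff_top_deriv hη2
  set U : V3 → ℝ := fun p => u p.1 p.2.1 p.2.2 with hUdef
  have hU : ContDiff ℝ (⊤ : ℕ∞) U := hu
  have repu : Rep3 u U := fun _ _ _ => rfl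
  set Ξf : V3 → ℝ := fun p => ε / 2 * Yc p * (T b₁ p * T η p - T (deriv η) p) with hΞdef
  set Φf : V3 → ℝ := fun p =>
      (-2 * T c₂ p * T η p + ε / 2 * (-(T (deriv (deriv η)) p) + T (deriv b₁) p * T η p
          + T b₁ p * T b₁ p * T η p)) * Yc p
        - T c₁ p * T η p + ε / 2 * T b₀ p * (T b₁ p * T η p - T (deriv η) p) with hΦdef
  set Qf : V3 → ℝ := fun p => Φf p - Ξf p * DD e1 U p - T η p * DD e2 U p with hQfdef
  have hΞ : ContDiff ℝ (⊤ : ℕ∞) Ξf := by rw [hΞdef]; fun_prop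
  have hΦ : ContDiff ℝ (⊤ : ℕ∞) Φf := by rw [hΦdef]; fun_prop
  have hQf : ContDiff ℝ (⊤ : ℕ∞) Qf := by rw [hQfdef]; fun_prop
  have repQ : Rep3 Q Qf := by
    intro x y t
    simp only [hQ, hφY, hξY, hQfdef, hΞdef, hΦdef, T, Yc,
      (repu.pxD hU) x y t, (repu.pyD hU) x y t]
    ring
  set Ef : V3 → ℝ := fun p =>
      DD e1 (fun q => DD e3 U q + U q * DD e1 U q + DD e1 (DD e1 (DD e1 U)) q) p
        + ε * DD e2 (DD e2 U) p + (T b₁ p * Yc p + T b₀ p) * DD e1 (DD e2 U) p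
        + (T c₂ p * Yc p ^ 2 + T c₁ p * Yc p + T c₀ p) * DD e1 (DD e1 U) p with hEdef
  have hEinner : ContDiff ℝ (⊤ : ℕ∞) (fun q => DD e3 U q + U q * DD e1 U q
      + DD e1 (DD e1 (DD e1 U)) q) := by fun_prop
  have repEinner : Rep3 (fun x y t => pt u x y t + u x y t * px u x y t
        + px (px (px u)) x y t)
      (fun q => DD e3 U q + U q * DD e1 U q + DD e1 (DD e1 (DD e1 U)) q) :=
    Rep3.addR (Rep3.addR (repu.ptD hU) (Rep3.mulR repu (repu.pxD hU)))
      (((repu.pxD hU).pxD (hU.dd e1)).pxD ((hU.dd e1).dd e1))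
  have hE0 : ∀ p : V3, Ef p = 0 := by
    intro p
    have h := hsol p.1 p.2.1 p.2.2
    rw [(repEinner.pxD hEinner) p.1 p.2.1 p.2.2,
      ((repu.pyD hU).pyD (hU.dd e2)) p.1 p.2.1 p.2.2,
      ((repu.pyD hU).pxD (hU.dd e2)) p.1 p.2.1 p.2.2,
      ((repu.pxD hU).pxD (hU.dd e1)) p.1 p.2.1 p.2.2] at h
    rw [hEdef]
    simp only [T, Yc]
    exact h
  have hEfun : Ef = fun _ => (0 : ℝ) := funext hE0
  have hEx : ∀ p : V3, DD e1 Ef p = 0 := by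
    intro p; rw [hEfun]; simp [DD]
  have hEy : ∀ p : V3, DD e2 Ef p = 0 := by
    intro p; rw [hEfun]; simp [DD]
  intro x y t
  have huQ : ContDiff ℝ (⊤ : ℕ∞) (fun q => U q * Qf q) := by fun_prop
  have hInner : ContDiff ℝ (⊤ : ℕ∞) (fun q => DD e3 Qf q + DD e1 (fun r => U r * Qf r) q
      + DD e1 (DD e1 (DD e1 Qf)) q) := by fun_prop
  have repInner : Rep3 (fun x y t => pt Q x y t
        + px (fun x y t => u x y t * Q x y t) x y t + px (px (px Q)) x y t)
      (fun q => DD e3 Qf q + DD e1 (fun r => U r * Qf r) q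
        + DD e1 (DD e1 (DD e1 Qf)) q) :=
    Rep3.addR (Rep3.addR (repQ.ptD hQf) ((Rep3.mulR repu repQ).pxD huQ))
      (((repQ.pxD hQf).pxD (hQf.dd e1)).pxD ((hQf.dd e1).dd e1))
  rw [(repInner.pxD hInner) x y t,
    ((repQ.pyD hQf).pyD (hQf.dd e2)) x y t,
    ((repQ.pyD hQf).pxD (hQf.dd e2)) x y t,
    ((repQ.pxD hQf).pxD (hQf.dd e1)) x y t]
  have Hx := hEx (x, y, t)
  have Hy := hEy (x, y, t)
  rw [hEdef] at Hx Hy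
  simp (disch := fun_prop) only [hQfdef, hΞdef, hΦdef, pow_two,
    DD_add', DD_sub', DD_neg', DD_mul', DD_const', DD_T1, DD_T2, DD_T3,
    DD_Y1, DD_Y2, DD_Y3, DD_comm21, DD_comm31, DD_comm32,
    mul_zero, zero_mul, add_zero, zero_add, mul_one, one_mul, sub_zero, zero_sub,
    neg_zero, neg_neg] at Hx Hy ⊢
  simp only [T, Yc] at Hx Hy ⊢
  linear_combination (-(ε / 2 * y * (b₁ t * η t - deriv η t))) * Hx - η t * Hy
    + ((deriv η t - b₁ t * η t) * DD e1 (DD e2 U) (x, y, t)) * hε2
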